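/- arXiv:2203.14809 — 2 statements merged into one kernel-verified Lean document; each statement's English description precedes it below -/
import Mathlib

section
/- Let N be a k-bounded data Petri net with injective labelling ℓ and let B = DPNtoDDS(N). Then N satisfies property (P2) if and only if every marking M in the state set of B with M ≥ M_F and M ≠ M_F is unreachable in B. -/
/-! ## Basic framework: values, assignments, formulas -/

/-- Values: booleans, integers, or rationals. -/
abbrev Val : Type := Bool ⊕ ℤ ⊕ ℚ

/-- An assignment of values to the variables in `V`. -/
abbrev Assign (V : Type) : Type := V → Val

/-- A formula over variables `V`, represented semantically by its set of satisfying
assignments.  (Formulas are taken up to logical equivalence, which by `funext`/`propext`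
coincides with equality of this representation; by quantifier elimination for linear
arithmetic, existential quantification stays within the language.) -/
def Formula (V : Type) : Type := Assign V → Prop

/-- Satisfiability of a formula. -/
def Formula.Sat {V : Type} (φ : Formula V) : Prop := ∃ α, φ α

/-- `C_α` : the formula `⋀_{v ∈ V} v = α(v)`. -/
def Cof {V : Type} (α : Assign V) : Formula V := fun α' => ∀ v, α' v = α v

/-- A transition variable assignment: values for the annotated variables
`V^r ∪ V^w` (read copies and written copies of the variables). -/
structure TAssign (V : Type) where
  read : Assign V
  write : Assign V

/-- A constraint of linear arithmetic over the annotated variables `V^r ∪ V^w`,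
represented semantically, together with the sets `read`/`write` of variables whose
read resp. written copies occur in it (`sat_congr` expresses that the constraint
depends only on occurring annotated variables). -/
structure Guard (V : Type) where
  sat : TAssign V → Prop
  reads : Set V
  writes : Set V
  sat_congr : ∀ β β' : TAssign V,
    (∀ v ∈ reads, β.read v = β'.read v) →
    (∀ v ∈ writes, β.write v = β'.write v) → (sat β ↔ sat β')

/-! ## Data-aware dynamic systems (DDS) -/

/-- A data-aware dynamic system `⟨B, b_I, A, Δ, B_F, V, α_I, guard⟩`
with states drawn from `S`, actions from `A` and process variables `V`. -/
structure DDS (S A V : Type) where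
  states : Set S
  init : S
  trans : Set (S × A × S)
  finals : Set S
  alphaI : Assign V
  guard : A → Guard V

/-- A step `(b, α) →(a,β) (b', α')` of a DDS. -/
def DDS.Step {S A V : Type} (D : DDS S A V) (b : S) (α : Assign V) (a : A)
    (β : TAssign V) (b' : S) (α' : Assign V) : Prop :=
  (b, a, b') ∈ D.trans ∧
  (∀ v, β.read v = α v) ∧
  (∀ v ∈ (D.guard a).writes, α' v = β.write v) ∧
  (∀ v, v ∉ (D.guard a).writes → α' v = α v) ∧
  (D.guard a).sat β

/-- `(b, α) →* (b', α')`: a derivation (finite sequence of consecutive steps) exists. -/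
inductive DDS.Reach {S A V : Type} (D : DDS S A V) :
    S × Assign V → S × Assign V → Prop
  | refl (c : S × Assign V) : Reach D c c
  | step {c : S × Assign V} {b b' : S} {α α' : Assign V} {a : A} {β : TAssign V} :
      Reach D c (b, α) → D.Step b α a β b' α' → Reach D c (b', α')

/-- The DDS has a blocked state: a run reaches a configuration from which
no final state is reachable. -/
def DDS.HasBlockedState {S A V : Type} (D : DDS S A V) : Prop :=
  ∃ b α, D.Reach (D.init, D.alphaI) (b, α) ∧
    ¬ ∃ bf α', bf ∈ D.finals ∧ D.Reach (b, α) (bf, α')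

/-- A state `b` is reachable in the DDS. -/
def DDS.ReachableState {S A V : Type} (D : DDS S A V) (b : S) : Prop :=
  ∃ α, D.Reach (D.init, D.alphaI) (b, α)

/-- A transition `(b, a, b') ∈ Δ` is reachable: some run traverses it. -/
def DDS.ReachableTrans {S A V : Type} (D : DDS S A V) (b : S) (a : A) (b' : S) : Prop :=
  (b, a, b') ∈ D.trans ∧
  ∃ α β α', D.Reach (D.init, D.alphaI) (b, α) ∧ D.Step b α a β b' α'

/-- Derivations recording their abstraction: `DDS.Deriv D b α σ b' α'` means there is a
derivation `(b, α) →* (b', α')` whose abstraction (symbolic derivation) is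
`b →a₁ b₁ →a₂ ⋯ →aₙ bₙ`, recorded as the trace `σ = [(a₁,b₁),…,(aₙ,bₙ)]`. -/
inductive DDS.Deriv {S A V : Type} (D : DDS S A V) :
    S → Assign V → List (A × S) → S → Assign V → Prop
  | refl (b : S) (α : Assign V) : Deriv D b α [] b α
  | step {b : S} {α : Assign V} {σ : List (A × S)} {b' : S} {α' : Assign V}
      {a : A} {β : TAssign V} {b'' : S} {α'' : Assign V} :
      Deriv D b α σ b' α' → D.Step b' α' a β b'' α'' →
      Deriv D b α (σ ++ [(a, b'')]) b'' α''

/-- Symbolic derivations: `DDS.SymDeriv D b σ b'` means `b →a₁ b₁ ⋯ →aₙ bₙ = b'`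
is a symbolic derivation (only states and actions, i.e. the trace `σ`). -/
inductive DDS.SymDeriv {S A V : Type} (D : DDS S A V) : S → List (A × S) → S → Prop
  | refl (b : S) : SymDeriv D b [] b
  | step {b : S} {σ : List (A × S)} {b' : S} {a : A} {b'' : S} :
      SymDeriv D b σ b' → (b', a, b'') ∈ D.trans → SymDeriv D b (σ ++ [(a, b'')]) b''

/-! ## Constraint graphs -/

/-- `update(φ, a)`: the formula (it exists by quantifier elimination) that is logically
equivalent to `∃U. φ[U/V] ∧ Δ_a[U/V^r, V/V^w]`, where `Δ_a` is the transition formula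
`guard(a) ∧ ⋀_{v ∉ write(a)} v^w = v^r`. -/
def DDS.update {S A V : Type} (D : DDS S A V) (φ : Formula V) (a : A) : Formula V :=
  fun α' => ∃ u : Assign V, φ u ∧ (D.guard a).sat ⟨u, α'⟩ ∧
    ∀ v, v ∉ (D.guard a).writes → α' v = u v

/-- Nodes of the constraint graph `CG(b₀, φ₀)` (with initial node `(b₀, φ₀)`);
for `CG(b₀, α)` take `φ₀ = C_α`.  Formulas are taken up to logical equivalence,
which in the semantic representation is equality. -/
inductive DDS.CGNode {S A V : Type} (D : DDS S A V) (b0 : S) (φ0 : Formula V) :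
    S → Formula V → Prop
  | init : CGNode D b0 φ0 b0 φ0
  | step {b : S} {φ : Formula V} {a : A} {b' : S} :
      CGNode D b0 φ0 b φ → (b, a, b') ∈ D.trans → Formula.Sat (D.update φ a) →
      CGNode D b0 φ0 b' (D.update φ a)

/-- Edges `(b, φ) →a (b', φ')` of the constraint graph with initial node `(b₀, φ₀)`. -/
def DDS.CGEdge {S A V : Type} (D : DDS S A V) (b0 : S) (φ0 : Formula V)
    (b : S) (φ : Formula V) (a : A) (b' : S) (φ' : Formula V) : Prop :=
  D.CGNode b0 φ0 b φ ∧ (b, a, b') ∈ D.trans ∧ Formula.Sat (D.update φ a) ∧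
    φ' = D.update φ a

/-- Paths in the constraint graph with initial node `(b₀, φ₀)`, from the initial node to a
node `(b, φ)`, recording the symbolic derivation `σ(π)` as the trace `σ : List (A × S)`. -/
inductive DDS.CGPath {S A V : Type} (D : DDS S A V) (b0 : S) (φ0 : Formula V) :
    S → Formula V → List (A × S) → Prop
  | refl : CGPath D b0 φ0 b0 φ0 []
  | step {b : S} {φ : Formula V} {σ : List (A × S)} {a : A} {b' : S} :
      CGPath D b0 φ0 b φ σ → (b, a, b') ∈ D.trans → Formula.Sat (D.update φ a) →
      CGPath D b0 φ0 b' (D.update φ a) (σ ++ [(a, b')])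

/-! ## The constraint graph `CG(b)` with placeholder variables `V₀` -/

/-- Lift a guard over `V` to one over `V ⊕ V`, where `Sum.inl v` is the variable `v ∈ V`
and `Sum.inr v` is the placeholder variable `v₀ ∈ V₀` (which is never read nor written). -/
def Guard.lift {V : Type} (g : Guard V) : Guard (V ⊕ V) where
  sat β := g.sat ⟨fun v => β.read (Sum.inl v), fun v => β.write (Sum.inl v)⟩
  reads := Sum.inl '' g.reads
  writes := Sum.inl '' g.writes
  sat_congr := by
    intro β β' hr hw
    apply g.sat_congr
    · intro v hv; exact hr _ ⟨v, hv, rfl⟩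
    · intro v hv; exact hw _ ⟨v, hv, rfl⟩

/-- Lift a DDS over variables `V` to one over `V ⊕ V`, where the second copy plays the
role of the fresh placeholder variables `V₀` (same states and transitions). -/
def DDS.lift {S A V : Type} (D : DDS S A V) : DDS S A (V ⊕ V) where
  states := D.states
  init := D.init
  trans := D.trans
  finals := D.finals
  alphaI := Sum.elim D.alphaI D.alphaI
  guard a := (D.guard a).lift

/-- The initial-node formula `⋀_{v ∈ V} v = v₀` of the constraint graph `CG(b)`. -/
def placeholderInit (V : Type) : Formula (V ⊕ V) :=
  fun γ => ∀ v, γ (Sum.inl v) = γ (Sum.inr v)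

/-- `final(b)`: the set of formulas `ψ` such that `(b_F, ψ)` is a node of `CG(b)`. -/
def DDS.finalFormulas {S A V : Type} (D : DDS S A V) (b bF : S) :
    Set (Formula (V ⊕ V)) :=
  {ψ | DDS.CGNode D.lift b (placeholderInit V) bF ψ}

/-- `blocked(b, φ)`: the formula (over the placeholder variables `V₀`, so represented as a
predicate on assignments to `V₀ ≅ V`) `φ[V₀/V] ∧ ¬(∃V. ⋁_{ψ ∈ final(b)} ψ)`. -/
def DDS.blocked {S A V : Type} (D : DDS S A V) (bF : S) (b : S) (φ : Formula V) :
    Formula V :=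
  fun α0 => φ α0 ∧
    ¬ ∃ (αv : Assign V) (ψ : Formula (V ⊕ V)),
        ψ ∈ D.finalFormulas b bF ∧ ψ (Sum.elim αv α0)

/-! ## Data Petri nets (DPN) -/

/-- A data Petri net `⟨P, T, F, ℓ, A, V, guard⟩` together with its initial marking `M_I`,
final marking `M_F` and initial assignment `α₀`.  The flow relation is split into its
place-to-transition and transition-to-place parts. -/
structure DPN (P T A V : Type) where
  flowPT : P → T → ℕ
  flowTP : T → P → ℕ
  lab : T → A
  guard : T → Guard V
  MI : P → ℕ
  MF : P → ℕ
  alpha0 : Assign V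

/-- A transition firing `(M, α) →(t,β) (M', α')` of a DPN. -/
def DPN.Firing {P T A V : Type} (N : DPN P T A V) (M : P → ℕ) (α : Assign V)
    (t : T) (β : TAssign V) (M' : P → ℕ) (α' : Assign V) : Prop :=
  (∀ v ∈ (N.guard t).reads, β.read v = α v) ∧
  (N.guard t).sat β ∧
  (∀ p, N.flowPT p t ≤ M p) ∧
  (∀ p, M' p = M p - N.flowPT p t + N.flowTP t p) ∧
  (∀ v ∈ (N.guard t).writes, α' v = β.write v) ∧
  (∀ v, v ∉ (N.guard t).writes → α' v = α v)

/-- `(M, α) →* (M', α')`: a sequence of transition firings of the DPN. -/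
inductive DPN.Reach {P T A V : Type} (N : DPN P T A V) :
    (P → ℕ) × Assign V → (P → ℕ) × Assign V → Prop
  | refl (c : (P → ℕ) × Assign V) : Reach N c c
  | step {c : (P → ℕ) × Assign V} {M M' : P → ℕ} {α α' : Assign V}
      {t : T} {β : TAssign V} :
      Reach N c (M, α) → N.Firing M α t β M' α' → Reach N c (M', α')

/-- The DPN is `k`-bounded. -/
def DPN.Bounded {P T A V : Type} (N : DPN P T A V) (k : ℕ) : Prop :=
  ∀ M α, N.Reach (N.MI, N.alpha0) (M, α) → ∀ p, M p ≤ k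

/-- Property (P1): every reachable state can be continued to a process run. -/
def DPN.P1 {P T A V : Type} (N : DPN P T A V) : Prop :=
  ∀ M α, N.Reach (N.MI, N.alpha0) (M, α) → ∃ α', N.Reach (M, α) (N.MF, α')

/-- Property (P2): termination is clean. -/
def DPN.P2 {P T A V : Type} (N : DPN P T A V) : Prop :=
  ∀ M α, N.Reach (N.MI, N.alpha0) (M, α) → (∀ p, N.MF p ≤ M p) → M = N.MF

/-- Property (P3): no dead transitions. -/
def DPN.P3 {P T A V : Type} (N : DPN P T A V) : Prop :=
  ∀ t : T, ∃ M α β M' α',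
    N.Reach (N.MI, N.alpha0) (M, α) ∧ N.Firing M α t β M' α'

/-- Data-aware soundness: (P1) ∧ (P2) ∧ (P3). -/
def DPN.Sound {P T A V : Type} (N : DPN P T A V) : Prop := N.P1 ∧ N.P2 ∧ N.P3

/-- `B = DPNtoDDS(N)` for a `k`-bounded DPN `N` with injective labelling: the states of `B`
are the `k`-bounded markings, initial state `M_I`, final states `{M_F}`, initial assignment
`α₀`, `guard'(ℓ(t)) = guard(t)`, and `(M, a, M') ∈ Δ` iff there is `t` with `ℓ(t) = a`,
`M(p) ≥ F(p,t)` and `M'(p) = M(p) − F(p,t) + F(t,p)` for all `p`. -/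
def IsDPNtoDDS {P T A V : Type} (N : DPN P T A V) (k : ℕ) (D : DDS (P → ℕ) A V) : Prop :=
  D.states = {M | ∀ p, M p ≤ k} ∧
  D.init = N.MI ∧
  D.finals = {N.MF} ∧
  D.alphaI = N.alpha0 ∧
  (∀ t, D.guard (N.lab t) = N.guard t) ∧
  ∀ M a M', (M, a, M') ∈ D.trans ↔
    ((∀ p, M p ≤ k) ∧ (∀ p, M' p ≤ k) ∧
      ∃ t, N.lab t = a ∧ (∀ p, N.flowPT p t ≤ M p) ∧
        (∀ p, M' p = M p - N.flowPT p t + N.flowTP t p))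

/-! The runs of `DPNtoDDS(N)` from its initial configuration are exactly the runs of `N`:
DDS transitions mirror enabled transitions of `N` with the same guards, and `k`-boundedness
keeps every reachable marking inside the state set. (P2) and the unreachability of strictly
covering markings are then contrapositives of each other. -/

namespace IsDPNtoDDS

variable {P T A V : Type} {N : DPN P T A V} {k : ℕ} {D : DDS (P → ℕ) A V}

theorem firing_of_step (hD : IsDPNtoDDS N k D) {M M' : P → ℕ} {α α' : Assign V} {a : A}
    {β : TAssign V} (hstep : D.Step M α a β M' α') : ∃ t, N.Firing M α t β M' α' := by
  obtain ⟨-, -, -, -, hguard, htrans⟩ := hD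
  obtain ⟨htr, hread, hwrite, hkeep, hsat⟩ := hstep
  obtain ⟨-, -, t, rfl, hflow, hM'⟩ := (htrans _ _ _).1 htr
  rw [hguard t] at hwrite hkeep hsat
  exact ⟨t, fun v _ => hread v, hsat, hflow, hM', hwrite, hkeep⟩

/-- A DDS step reads every variable, so the read part of the firing's assignment is
replaced by the current assignment; the guard only sees the variables it reads. -/
theorem step_of_firing (hD : IsDPNtoDDS N k D) {M M' : P → ℕ} {α α' : Assign V} {t : T}
    {β : TAssign V} (hM : ∀ p, M p ≤ k) (hM' : ∀ p, M' p ≤ k)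
    (hfire : N.Firing M α t β M' α') : D.Step M α (N.lab t) ⟨α, β.write⟩ M' α' := by
  obtain ⟨-, -, -, -, hguard, htrans⟩ := hD
  obtain ⟨hread, hsat, hflow, hmark, hwrite, hkeep⟩ := hfire
  have hsat' : (N.guard t).sat ⟨α, β.write⟩ :=
    ((N.guard t).sat_congr ⟨α, β.write⟩ β (fun v hv => (hread v hv).symm) fun _ _ => rfl).2
      hsat
  rw [← hguard t] at hwrite hkeep hsat'
  exact ⟨(htrans _ _ _).2 ⟨hM, hM', t, rfl, hflow, hmark⟩, fun _ => rfl, hwrite, hkeep,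
    hsat'⟩

theorem dpn_reach_of_reach (hD : IsDPNtoDDS N k D) {c c' : (P → ℕ) × Assign V}
    (h : D.Reach c c') : N.Reach c c' := by
  induction h with
  | refl => exact .refl _
  | step _ hstep ih =>
    obtain ⟨t, hfire⟩ := hD.firing_of_step hstep
    exact .step ih hfire

theorem reach_init_iff (hD : IsDPNtoDDS N k D) (hbound : N.Bounded k)
    {c : (P → ℕ) × Assign V} :
    D.Reach (D.init, D.alphaI) c ↔ N.Reach (N.MI, N.alpha0) c := by
  rw [hD.2.1, hD.2.2.2.1]
  refine ⟨hD.dpn_reach_of_reach, fun h => ?_⟩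
  induction h with
  | refl => exact .refl _
  | step hreach hfire ih =>
    have hbound' := hbound _ _ (.step hreach hfire)
    exact .step ih (hD.step_of_firing (hbound _ _ hreach) hbound' hfire)

theorem reachableState_iff (hD : IsDPNtoDDS N k D) (hbound : N.Bounded k) {M : P → ℕ} :
    D.ReachableState M ↔ ∃ α, N.Reach (N.MI, N.alpha0) (M, α) :=
  exists_congr fun _ => hD.reach_init_iff hbound

end IsDPNtoDDS

theorem dpn_P2_iff_strictly_covering_unreachable_general {P T A V : Type}
    (N : DPN P T A V) (k : ℕ) (D : DDS (P → ℕ) A V)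
    (hbound : N.Bounded k)
    (hDDS : IsDPNtoDDS N k D) :
    N.P2 ↔ ∀ M ∈ D.states, (∀ p, N.MF p ≤ M p) → M ≠ N.MF → ¬ D.ReachableState M := by
  simp only [hDDS.reachableState_iff hbound]
  constructor
  · rintro hP2 M - hcover hne ⟨α, hreach⟩
    exact hne (hP2 M α hreach hcover)
  · intro hunreach M α hreach hcover
    by_contra hne
    exact hunreach M (hDDS.1 ▸ hbound M α hreach) hcover hne ⟨α, hreach⟩

/-- Let `N` be a `k`-bounded DPN with injective labelling `ℓ` and
`B = DPNtoDDS(N)`.  Then `N` satisfies (P2) iff every marking `M` in the state set of `B`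
with `M ≥ M_F` and `M ≠ M_F` is unreachable in `B`. -/
theorem dpn_P2_iff_strictly_covering_unreachable {P T A V : Type}
    [Finite P] [Finite T] [Finite A] [Finite V]
    (N : DPN P T A V) (k : ℕ) (D : DDS (P → ℕ) A V)
    (hbound : N.Bounded k) (hinj : Function.Injective N.lab)
    (hDDS : IsDPNtoDDS N k D) :
    N.P2 ↔ ∀ M ∈ D.states, (∀ p, N.MF p ≤ M p) → M ≠ N.MF → ¬ D.ReachableState M :=
  dpn_P2_iff_strictly_covering_unreachable_general N k D hbound hDDS
end

section
/- Let N be a k-bounded data Petri net with injective labelling ℓ, B = DPNtoDDS(N), and CG the constraint graph of B. Then N satisfies property (P1) if and only if for every node (M, φ) of CG with M ≠ M_F the formula blocked(M, φ) is unsatisfiable. -/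
/-! ## Auxiliary lemmas -/

section Aux

variable {P T A V S : Type}

/-- Transitivity of DPN reachability. -/
theorem dpnReach_trans {N : DPN P T A V} {c c' c'' : (P → ℕ) × Assign V}
    (h1 : N.Reach c c') (h2 : N.Reach c' c'') : N.Reach c c'' := by
  induction h2 with
  | refl => exact h1
  | step h f ih => exact DPN.Reach.step ih f

/-- A DDS step of `DPNtoDDS(N)` induces a firing of `N`. -/
theorem ddsStep_firing {N : DPN P T A V} {k : ℕ} {D : DDS (P → ℕ) A V}
    (hDDS : IsDPNtoDDS N k D) {M : P → ℕ} {α : Assign V} {a : A} {β : TAssign V}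
    {M' : P → ℕ} {α' : Assign V} (h : D.Step M α a β M' α') :
    ∃ t, N.lab t = a ∧ N.Firing M α t β M' α' := by
  obtain ⟨htr, hread, hwr, hnw, hsat⟩ := h
  obtain ⟨-, -, -, -, hg, htrans⟩ := hDDS
  obtain ⟨-, -, t, hlab, hpre, hpost⟩ := (htrans M a M').1 htr
  subst hlab
  rw [hg t] at hwr hnw hsat
  exact ⟨t, rfl, fun v _ => hread v, hsat, hpre, hpost, hwr, hnw⟩

/-- A firing of `N` between `k`-bounded markings induces a DDS step of `DPNtoDDS(N)`. -/
theorem firing_ddsStep {N : DPN P T A V} {k : ℕ} {D : DDS (P → ℕ) A V}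
    (hDDS : IsDPNtoDDS N k D) {M : P → ℕ} {α : Assign V} {t : T} {β : TAssign V}
    {M' : P → ℕ} {α' : Assign V} (h : N.Firing M α t β M' α')
    (hb : ∀ p, M p ≤ k) (hb' : ∀ p, M' p ≤ k) :
    D.Step M α (N.lab t) ⟨α, β.write⟩ M' α' := by
  obtain ⟨hread, hsat, hpre, hpost, hwr, hnw⟩ := h
  obtain ⟨-, -, -, -, hg, htrans⟩ := hDDS
  refine ⟨(htrans M (N.lab t) M').2 ⟨hb, hb', t, rfl, hpre, hpost⟩, fun v => rfl, ?_, ?_, ?_⟩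
  · rw [hg t]; exact hwr
  · rw [hg t]; exact hnw
  · rw [hg t]
    exact ((N.guard t).sat_congr β ⟨α, β.write⟩ hread (fun v _ => rfl)).mp hsat

/-- DDS reachability implies DPN reachability. -/
theorem ddsReach_dpn {N : DPN P T A V} {k : ℕ} {D : DDS (P → ℕ) A V}
    (hDDS : IsDPNtoDDS N k D) {c c' : (P → ℕ) × Assign V}
    (h : D.Reach c c') : N.Reach c c' := by
  induction h with
  | refl => exact .refl _
  | step h s ih =>
    obtain ⟨t, -, f⟩ := ddsStep_firing hDDS s
    exact DPN.Reach.step ih f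

/-- DPN reachability (from a configuration reachable from the initial one)
implies DDS reachability. -/
theorem dpnReach_dds {N : DPN P T A V} {k : ℕ} {D : DDS (P → ℕ) A V}
    (hDDS : IsDPNtoDDS N k D) (hbound : N.Bounded k) {c c' : (P → ℕ) × Assign V}
    (h : N.Reach c c') (hc : N.Reach (N.MI, N.alpha0) c) : D.Reach c c' := by
  induction h with
  | refl => exact .refl _
  | step h f ih =>
    have hM := dpnReach_trans hc h
    have hM' := DPN.Reach.step hM f
    exact DDS.Reach.step ih
      (firing_ddsStep hDDS f (hbound _ _ hM) (hbound _ _ hM'))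

/-- Soundness of constraint-graph nodes: every assignment satisfying a node formula
is reached by an actual run from some initial assignment satisfying `φ0`. -/
theorem cgnode_sound {A V : Type} {D : DDS S A V} {b0 : S} {φ0 : Formula V} {b : S}
    {φ : Formula V} (h : D.CGNode b0 φ0 b φ) {γ : Assign V} (hγ : φ γ) :
    ∃ γ0, φ0 γ0 ∧ D.Reach (b0, γ0) (b, γ) := by
  induction h generalizing γ with
  | init => exact ⟨γ, hγ, .refl _⟩
  | step hn htr hs ih =>
    obtain ⟨u, hu, hsat, hnw⟩ := hγ
    obtain ⟨γ0, h0, hr⟩ := ih hu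
    exact ⟨γ0, h0, .step hr ⟨htr, fun v => rfl, fun v _ => rfl, hnw, hsat⟩⟩

/-- Completeness of constraint-graph nodes: every reachable configuration is captured
by a node formula. -/
theorem reach_cgnode {A V : Type} {D : DDS S A V} {c c' : S × Assign V}
    (h : D.Reach c c') (φ0 : Formula V) (h0 : φ0 c.2) :
    ∃ φ, D.CGNode c.1 φ0 c'.1 φ ∧ φ c'.2 := by
  induction h with
  | refl => exact ⟨φ0, .init, h0⟩
  | step h s ih =>
    rename_i b b' α α' a β
    obtain ⟨φ, hnode, hφ⟩ := ih
    obtain ⟨htr, hread, hwr, hnw, hsat⟩ := s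
    have hsat' : (D.guard a).sat ⟨α, α'⟩ :=
      ((D.guard a).sat_congr β ⟨α, α'⟩ (fun v _ => hread v) (fun v hv => (hwr v hv).symm)).mp hsat
    have hupd : D.update φ a α' := ⟨α, hφ, hsat', hnw⟩
    exact ⟨D.update φ a, .step hnode htr ⟨α', hupd⟩, hupd⟩

/-- Runs of the lifted DDS project to runs of the original DDS, keeping the
placeholder components fixed. -/
theorem lift_reach_proj {A V : Type} {D : DDS S A V} {c c' : S × Assign (V ⊕ V)}
    (h : D.lift.Reach c c') :
    D.Reach (c.1, fun v => c.2 (Sum.inl v)) (c'.1, fun v => c'.2 (Sum.inl v)) ∧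
      ∀ v, c'.2 (Sum.inr v) = c.2 (Sum.inr v) := by
  induction h with
  | refl => exact ⟨.refl _, fun v => rfl⟩
  | step h s ih =>
    rename_i b b' α α' a β
    obtain ⟨hreach, hfix⟩ := ih
    obtain ⟨htr, hread, hwr, hnw, hsat⟩ := s
    refine ⟨.step hreach
      (β := ⟨fun v => β.read (Sum.inl v), fun v => β.write (Sum.inl v)⟩)
      ⟨htr, fun v => hread (Sum.inl v), ?_, ?_, hsat⟩, ?_⟩
    · intro v hv
      exact hwr (Sum.inl v) ⟨v, hv, rfl⟩
    · intro v hv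
      refine hnw (Sum.inl v) ?_
      rintro ⟨w, hw, hww⟩
      exact hv (Sum.inl.inj hww ▸ hw)
    · intro v
      exact (hnw (Sum.inr v) (by rintro ⟨w, -, h⟩; cases h)).trans (hfix v)

/-- Runs of a DDS lift to runs of the lifted DDS, with arbitrary fixed placeholders. -/
theorem reach_lift {A V : Type} {D : DDS S A V} {c c' : S × Assign V}
    (h : D.Reach c c') (α0 : Assign V) :
    D.lift.Reach (c.1, Sum.elim c.2 α0) (c'.1, Sum.elim c'.2 α0) := by
  induction h with
  | refl => exact .refl _
  | step h s ih =>
    rename_i b b' α α' a β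
    obtain ⟨htr, hread, hwr, hnw, hsat⟩ := s
    refine DDS.Reach.step ih
      (β := ⟨Sum.elim β.read α0, Sum.elim β.write α0⟩)
      ⟨htr, ?_, ?_, ?_, hsat⟩
    · rintro (v | v)
      · exact hread v
      · rfl
    · rintro w ⟨v, hv, rfl⟩
      exact hwr v hv
    · rintro (v | v) hv
      · exact hnw v (fun hmem => hv ⟨v, hmem, rfl⟩)
      · rfl

end Aux

/-- Let `N` be a `k`-bounded DPN with injective labelling,
`B = DPNtoDDS(N)` and `CG` its constraint graph.  Then `N` satisfies (P1) iff for every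
node `(M, φ)` of `CG` with `M ≠ M_F`, the formula `blocked(M, φ)` is unsatisfiable. -/
theorem dpn_P1_iff_blocked_unsat {P T A V : Type}
    [Finite P] [Finite T] [Finite A] [Finite V]
    (N : DPN P T A V) (k : ℕ) (D : DDS (P → ℕ) A V)
    (hbound : N.Bounded k) (hinj : Function.Injective N.lab)
    (hDDS : IsDPNtoDDS N k D) :
    N.P1 ↔ ∀ (M : P → ℕ) (φ : Formula V), D.CGNode D.init (Cof D.alphaI) M φ →
      M ≠ N.MF → ¬ Formula.Sat (D.blocked N.MF M φ) := by
  have hinit : D.init = N.MI := hDDS.2.1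
  have halpha : D.alphaI = N.alpha0 := hDDS.2.2.2.1
  constructor
  · -- (P1) implies every non-final node is non-blocked
    intro hP1 M φ hnode hMF hsat
    obtain ⟨α0, hφ, hnofin⟩ := hsat
    obtain ⟨γ0, h0, hr⟩ := cgnode_sound hnode hφ
    have hγ0 : γ0 = D.alphaI := funext h0
    rw [hγ0] at hr
    have hreachN : N.Reach (N.MI, N.alpha0) (M, α0) := by
      have := ddsReach_dpn hDDS hr
      rwa [hinit, halpha] at this
    obtain ⟨α', hcont⟩ := hP1 M α0 hreachN
    have hddscont : D.Reach (M, α0) (N.MF, α') :=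
      dpnReach_dds hDDS hbound hcont hreachN
    have hlift := reach_lift hddscont α0
    obtain ⟨ψ, hψnode, hψ⟩ :=
      reach_cgnode (c := (M, Sum.elim α0 α0)) hlift (placeholderInit V) (fun v => rfl)
    exact hnofin ⟨α', ψ, hψnode, hψ⟩
  · -- blocked-unsatisfiability implies (P1)
    intro hblk M α hreach
    by_cases hMF : M = N.MF
    · exact ⟨α, hMF ▸ DPN.Reach.refl _⟩
    · have hdds : D.Reach (D.init, D.alphaI) (M, α) := by
        rw [hinit, halpha]
        exact dpnReach_dds hDDS hbound hreach (.refl _)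
      obtain ⟨φ, hnode, hφ⟩ := reach_cgnode hdds (Cof D.alphaI) (fun v => rfl)
      have hunsat := hblk M φ hnode hMF
      have hex : ∃ (αv : Assign V) (ψ : Formula (V ⊕ V)),
          ψ ∈ D.finalFormulas M N.MF ∧ ψ (Sum.elim αv α) := by
        by_contra hc
        exact hunsat ⟨α, hφ, hc⟩
      obtain ⟨αv, ψ, hψmem, hψ⟩ := hex
      obtain ⟨γ0, h0, hr⟩ := cgnode_sound hψmem hψ
      obtain ⟨hproj, hinr⟩ := lift_reach_proj hr
      have h1 : (fun v => γ0 (Sum.inl v)) = α := by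
        funext v
        rw [h0 v]
        exact (hinr v).symm
      rw [h1] at hproj
      exact ⟨αv, ddsReach_dpn hDDS hproj⟩
end
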